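/- arXiv:2203.15037 — 6 statements merged into one kernel-verified Lean document; each statement's English description precedes it below -/
import Mathlib

section
/- Fix reals c > 0 and y1, y2 ≥ 0 with y1 + y2 = c and y1 < c. Define F(x2) = y1 + y2 - y2·exp(x2/(c - y1) - 1) + c·exp(x2/c - 1) - c/e on the interval [0, c - y1]. Then F is quasi-concave on [0, c - y1]: at any interior critical point of F, the second derivative of F is strictly negative whenever y1 > 0; consequently the minimum of F over [0, c - y1] is attained at an endpoint. -/
/-- The function F from Step (a) of the proof of the lower bound on MP. -/
noncomputable def F (c y1 y2 : ℝ) (x2 : ℝ) : ℝ :=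
  y1 + y2 - y2 * Real.exp (x2 / (c - y1) - 1) + c * Real.exp (x2 / c - 1)
    - c / Real.exp 1

lemma hasDerivAt_exp_lin (b : ℝ) (x : ℝ) :
    HasDerivAt (fun x : ℝ => Real.exp (x / b - 1)) (b⁻¹ * Real.exp (x / b - 1)) x := by
  have h : HasDerivAt (fun x : ℝ => x / b - 1) b⁻¹ x := by
    simpa [div_eq_mul_inv] using ((hasDerivAt_id x).mul_const b⁻¹).sub_const 1
  simpa [mul_comm] using h.exp

lemma hasDerivAt_F (c y1 y2 x : ℝ) :
    HasDerivAt (F c y1 y2)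
      (-(y2 * ((c - y1)⁻¹ * Real.exp (x / (c - y1) - 1)))
        + c * (c⁻¹ * Real.exp (x / c - 1))) x := by
  unfold F
  have h1 := (hasDerivAt_exp_lin (c - y1) x).const_mul y2
  have h2 := (hasDerivAt_exp_lin c x).const_mul c
  simpa [sub_eq_add_neg, add_assoc] using
    (((hasDerivAt_const x (y1 + y2)).sub h1).add h2).sub_const (c / Real.exp 1)

lemma derivF_eq (c y1 y2 : ℝ) (hc : 0 < c) (hsum : y1 + y2 = c) (hlt : y1 < c) :
    deriv (F c y1 y2) = fun x => -Real.exp (x / (c - y1) - 1) + Real.exp (x / c - 1) := by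
  funext x
  rw [(hasDerivAt_F c y1 y2 x).deriv]
  have hb : c - y1 ≠ 0 := by linarith
  have hy2 : y2 = c - y1 := by linarith
  field_simp [hy2]
  rw [hy2]; ring

lemma deriv2F_eq (c y1 y2 x : ℝ) (hc : 0 < c) (hsum : y1 + y2 = c) (hlt : y1 < c) :
    deriv (deriv (F c y1 y2)) x
      = -((c - y1)⁻¹ * Real.exp (x / (c - y1) - 1)) + c⁻¹ * Real.exp (x / c - 1) := by
  rw [derivF_eq c y1 y2 hc hsum hlt]
  exact (((hasDerivAt_exp_lin (c - y1) x).neg).add (hasDerivAt_exp_lin c x)).deriv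

theorem F_quasiconcave (c y1 y2 : ℝ) (hc : 0 < c) (hy1 : 0 ≤ y1) (hy2 : 0 ≤ y2)
    (hsum : y1 + y2 = c) (hlt : y1 < c) :
    (∀ x2 ∈ Set.Ioo (0:ℝ) (c - y1),
      deriv (F c y1 y2) x2 = 0 → 0 < y1 → deriv (deriv (F c y1 y2)) x2 < 0) ∧
    (∃ z ∈ ({0, c - y1} : Set ℝ),
      ∀ x2 ∈ Set.Icc (0:ℝ) (c - y1), F c y1 y2 z ≤ F c y1 y2 x2) := by
  have hb : 0 < c - y1 := by linarith
  constructor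
  · intro x2 hx2 hcrit hy1pos
    have hd := derivF_eq c y1 y2 hc hsum hlt
    rw [hd] at hcrit
    simp only at hcrit
    have heq : Real.exp (x2 / (c - y1) - 1) = Real.exp (x2 / c - 1) := by linarith
    rw [deriv2F_eq c y1 y2 x2 hc hsum hlt, heq]
    have h1 : c⁻¹ < (c - y1)⁻¹ := by
      apply inv_strictAnti₀ hb; linarith
    have h2 : 0 < Real.exp (x2 / c - 1) := Real.exp_pos _
    nlinarith
  · -- concavity
    have hconc : ConcaveOn ℝ (Set.Icc 0 (c - y1)) (F c y1 y2) := by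
      apply concaveOn_of_deriv2_nonpos (convex_Icc _ _)
      · exact fun x _ => ((hasDerivAt_F c y1 y2 x).continuousAt).continuousWithinAt
      · exact fun x _ => ((hasDerivAt_F c y1 y2 x).differentiableAt).differentiableWithinAt
      · intro x _
        rw [derivF_eq c y1 y2 hc hsum hlt]
        exact ((((hasDerivAt_exp_lin (c - y1) x).neg).add
          (hasDerivAt_exp_lin c x)).differentiableAt).differentiableWithinAt
      · intro x hx
        rw [interior_Icc] at hx
        have hx0 : 0 < x := hx.1
        show deriv (deriv (F c y1 y2)) x ≤ 0
        rw [deriv2F_eq c y1 y2 x hc hsum hlt]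
        have h1 : c⁻¹ ≤ (c - y1)⁻¹ := by
          apply inv_anti₀ hb; linarith
        have h2 : Real.exp (x / c - 1) ≤ Real.exp (x / (c - y1) - 1) := by
          apply Real.exp_le_exp.2
          have : x / c ≤ x / (c - y1) := by
            apply div_le_div_of_nonneg_left hx0.le hb; linarith
          linarith
        have h3 : c⁻¹ * Real.exp (x / c - 1) ≤ (c - y1)⁻¹ * Real.exp (x / (c - y1) - 1) :=
          mul_le_mul h1 h2 (Real.exp_pos _).le (inv_nonneg.2 hb.le)
        linarith
    have h0 : (0:ℝ) ∈ Set.Icc (0:ℝ) (c - y1) := ⟨le_refl _, hb.le⟩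
    have h1 : (c - y1) ∈ Set.Icc (0:ℝ) (c - y1) := ⟨hb.le, le_refl _⟩
    have hmin : ∀ x2 ∈ Set.Icc (0:ℝ) (c - y1),
        min (F c y1 y2 0) (F c y1 y2 (c - y1)) ≤ F c y1 y2 x2 := by
      intro x2 hx2
      apply hconc.ge_on_segment h0 h1
      rw [segment_eq_Icc hb.le]; exact hx2
    rcases le_total (F c y1 y2 0) (F c y1 y2 (c - y1)) with h | h
    · exact ⟨0, Or.inl rfl, fun x2 hx2 => by
        have := hmin x2 hx2; rwa [min_eq_left h] at this⟩
    · exact ⟨c - y1, Or.inr rfl, fun x2 hx2 => by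
        have := hmin x2 hx2; rwa [min_eq_right h] at this⟩
end

section
/- Fix reals c > 0 and y1, y2 ≥ 0 with y1 + y2 = c. For every x2 ∈ [0, c - y1], y1 + y2 - y2·exp(x2/(c - y1) - 1) + c·exp(x2/c - 1) - c/e ≥ (1 - 1/e)·(y1 + y2). -/
theorem pointwise_MP_bound (c y1 y2 : ℝ) (hc : 0 < c) (hy1 : 0 ≤ y1)
    (hy2 : 0 ≤ y2) (hsum : y1 + y2 = c) :
    ∀ x2 ∈ Set.Icc (0:ℝ) (c - y1),
      y1 + y2 - y2 * Real.exp (x2 / (c - y1) - 1) + c * Real.exp (x2 / c - 1)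
          - c / Real.exp 1
        ≥ (1 - 1 / Real.exp 1) * (y1 + y2) := by
  intro x2 hx2
  obtain ⟨hx0, hxu⟩ := hx2
  have hcy : c - y1 = y2 := by linarith
  rw [hcy] at hxu ⊢
  have key : y2 * Real.exp (x2 / y2 - 1) ≤ c * Real.exp (x2 / c - 1) := by
    rcases eq_or_lt_of_le hy2 with h0 | hpos
    · rw [← h0]
      simp
      positivity
    · have hy2c : y2 ≤ c := by linarith
      have h1 : Real.exp (x2 / y2 - 1)
          = Real.exp (x2 / y2 - x2 / c) * Real.exp (x2 / c - 1) := by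
        rw [← Real.exp_add]; ring_nf
      have h2 : x2 / y2 - x2 / c ≤ 1 - y2 / c := by
        have : x2 / y2 - x2 / c = x2 * (1 / y2 - 1 / c) := by
          field_simp
        rw [this]
        have hnn : 0 ≤ 1 / y2 - 1 / c := by
          rw [sub_nonneg]
          exact one_div_le_one_div_of_le hpos hy2c
        have := mul_le_mul_of_nonneg_right hxu hnn
        calc x2 * (1 / y2 - 1 / c) ≤ y2 * (1 / y2 - 1 / c) := this
          _ = 1 - y2 / c := by field_simp
      have h3 : Real.exp (1 - y2 / c) ≤ c / y2 := by
        have ha : y2 / c ≤ Real.exp (y2 / c - 1) := by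
          have := Real.add_one_le_exp (y2 / c - 1); linarith
        have hb : Real.exp (1 - y2 / c) = 1 / Real.exp (y2 / c - 1) := by
          rw [eq_div_iff (Real.exp_ne_zero _), ← Real.exp_add]; ring_nf
          exact Real.exp_zero
        rw [hb]
        rw [div_le_div_iff₀ (Real.exp_pos _) hpos]
        have := mul_le_mul_of_nonneg_right ha hc.le
        rw [div_mul_cancel₀ _ hc.ne'] at this
        linarith
      calc y2 * Real.exp (x2 / y2 - 1)
          = y2 * Real.exp (x2 / y2 - x2 / c) * Real.exp (x2 / c - 1) := by
            rw [h1]; ring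
        _ ≤ y2 * (c / y2) * Real.exp (x2 / c - 1) := by
            apply mul_le_mul_of_nonneg_right _ (Real.exp_pos _).le
            apply mul_le_mul_of_nonneg_left _ hy2
            exact (Real.exp_le_exp.mpr h2).trans h3
        _ = c * Real.exp (x2 / c - 1) := by field_simp
  have hsum' : y1 + y2 = c := hsum
  have he : (1 - 1 / Real.exp 1) * (y1 + y2) = c - c / Real.exp 1 := by
    rw [hsum']; ring
  rw [he]
  linarith
end

section
/- Let k ≥ 1, κ ∈ {0,...,k-1}, r = 1 + 1/k, and α_j = r^j/(k·r^{κ+1}) for 1 ≤ j ≤ κ, α_j = 0 otherwise. Then for every i with 1 ≤ i ≤ κ + 1, ∑_{j=1}^{i-1} ((k + j)/k)·α_j = ((i-1)/k)·r^i / r^{κ+1}, and for i > κ + 1 the sum equals κ/k. -/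
theorem weighted_geometric_sum_alpha (k κ : ℕ) (hk : 1 ≤ k) (hκ : κ ≤ k - 1)
    (r : ℝ) (hr : r = 1 + 1 / (k : ℝ))
    (α : ℕ → ℝ)
    (hα : ∀ j, α j = if 1 ≤ j ∧ j ≤ κ then r ^ j / ((k : ℝ) * r ^ (κ + 1)) else 0) :
    (∀ i, 1 ≤ i → i ≤ κ + 1 →
      ∑ j ∈ Finset.Icc 1 (i - 1), (((k : ℝ) + j) / k) * α j
        = (((i : ℝ) - 1) / k) * r ^ i / r ^ (κ + 1)) ∧
    (∀ i, κ + 1 < i →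
      ∑ j ∈ Finset.Icc 1 (i - 1), (((k : ℝ) + j) / k) * α j = (κ : ℝ) / k) := by
  have hk0 : (0 : ℝ) < k := by exact_mod_cast hk
  have hkne : (k : ℝ) ≠ 0 := ne_of_gt hk0
  have hr0 : (0 : ℝ) < r := by
    rw [hr]; positivity
  have hrne : r ≠ 0 := ne_of_gt hr0
  have hrpne : r ^ (κ + 1) ≠ 0 := pow_ne_zero _ hrne
  -- main helper: sum up to m ≤ κ
  have key : ∀ m, m ≤ κ →
      ∑ j ∈ Finset.Icc 1 m, (((k : ℝ) + j) / k) * α j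
        = ((m : ℝ) / k) * r ^ (m + 1) / r ^ (κ + 1) := by
    intro m hm
    induction m with
    | zero => simp
    | succ n ih =>
      have hn : n ≤ κ := Nat.le_of_succ_le hm
      rw [Finset.sum_Icc_succ_top (by omega : 1 ≤ n + 1), ih hn]
      rw [hα (n + 1)]
      rw [if_pos ⟨by omega, hm⟩]
      have hrec : r ^ (n + 2) = r ^ (n + 1) * r := by ring
      push_cast
      have hkr : (k : ℝ) * r = k + 1 := by rw [hr]; field_simp
      field_simp
      rw [hrec]
      linear_combination (-((n : ℝ) + 1)) * r ^ (n + 1) * hkr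
  constructor
  · intro i hi1 hi2
    have h1 : i - 1 ≤ κ := by omega
    rw [key (i - 1) h1]
    have h2 : i - 1 + 1 = i := by omega
    rw [h2]
    congr 2
    push_cast [Nat.cast_sub hi1]
    ring
  · intro i hi
    have hsub : Finset.Icc 1 κ ⊆ Finset.Icc 1 (i - 1) := by
      apply Finset.Icc_subset_Icc_right; omega
    rw [← Finset.sum_subset hsub]
    · rw [key κ le_rfl]
      field_simp
    · intro x hx hx2
      simp only [Finset.mem_Icc] at hx hx2
      rw [hα x, if_neg (by omega)]
      ring
end

section
/- For every β ∈ [0, 1], β + ∫_0^{1-β} min(1, -log(1 - x)) dx equals 1 - 1/e if β ≤ 1/e, and equals 1 + β·log(β) if β > 1/e. -/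
open MeasureTheory

lemma hardness_antider (t : ℝ) (ht0 : 0 ≤ t) (ht : t < 1) :
    ∫ x in (0:ℝ)..t, -Real.log (1 - x) = (1 - t) * Real.log (1 - t) + t := by
  have key : ∀ x ∈ Set.uIcc (0:ℝ) t,
      HasDerivAt (fun y => (1 - y) * Real.log (1 - y) + y) (-Real.log (1 - x)) x := by
    intro x hx
    rw [Set.uIcc_of_le ht0] at hx
    have hx1 : (0:ℝ) < 1 - x := by linarith [hx.2]
    have h1 : HasDerivAt (fun y : ℝ => 1 - y) (-1) x := by
      simpa using (hasDerivAt_id x).const_sub 1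
    have h2 : HasDerivAt (fun y : ℝ => Real.log (1 - y)) (-1 / (1 - x)) x := by
      simpa using h1.log (ne_of_gt hx1)
    have h3 : HasDerivAt (fun y => (1 - y) * Real.log (1 - y) + y) _ x :=
      (h1.mul h2).add (hasDerivAt_id x)
    convert h3 using 1
    field_simp [ne_of_gt hx1]
    ring
  have hcont : ContinuousOn (fun x => -Real.log (1 - x)) (Set.uIcc 0 t) := by
    rw [Set.uIcc_of_le ht0]
    apply ContinuousOn.neg
    apply ContinuousOn.log (by fun_prop)
    intro x hx
    have : (0:ℝ) < 1 - x := by linarith [hx.2]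
    exact ne_of_gt this
  rw [intervalIntegral.integral_eq_sub_of_hasDerivAt key hcont.intervalIntegrable]
  simp [Real.log_one]

theorem hardness_integral (β : ℝ) (hβ : β ∈ Set.Icc (0:ℝ) 1) :
    β + ∫ x in (0:ℝ)..(1 - β), min 1 (-Real.log (1 - x))
      = if β ≤ 1 / Real.exp 1 then 1 - 1 / Real.exp 1
        else 1 + β * Real.log β := by
  obtain ⟨hβ0, hβ1⟩ := hβ
  have hepos : (0:ℝ) < Real.exp 1 := Real.exp_pos 1
  have he1 : (1:ℝ) < Real.exp 1 := by
    have := Real.add_one_lt_exp (x := 1) one_ne_zero; linarith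
  have hinv : (0:ℝ) < 1 / Real.exp 1 := by positivity
  have hinvlt : 1 / Real.exp 1 < 1 := by
    rw [div_lt_one hepos]; exact he1
  have hlog_inv : Real.log (1 / Real.exp 1) = -1 := by
    rw [Real.log_div one_ne_zero (ne_of_gt hepos), Real.log_one, Real.log_exp]; ring
  by_cases hc : β ≤ 1 / Real.exp 1
  · rw [if_pos hc]
    set c : ℝ := 1 - 1 / Real.exp 1 with hcdef
    have hc0 : 0 ≤ c := by simp only [hcdef]; linarith
    have hc1 : c < 1 := by simp only [hcdef]; linarith
    have hcle : c ≤ 1 - β := by simp only [hcdef]; linarith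
    -- piece 1: on [0, c], min = -log(1-x)
    have heq1 : Set.EqOn (fun x => min 1 (-Real.log (1 - x)))
        (fun x => -Real.log (1 - x)) (Set.uIcc 0 c) := by
      intro x hx
      rw [Set.uIcc_of_le hc0] at hx
      have hx2 : x ≤ 1 - 1 / Real.exp 1 := hcdef ▸ hx.2
      have hx1 : 1 / Real.exp 1 ≤ 1 - x := by linarith
      have : Real.log (1 / Real.exp 1) ≤ Real.log (1 - x) :=
        Real.log_le_log hinv hx1
      rw [hlog_inv] at this
      simp only
      rw [min_eq_right (by linarith)]
    have hI1 : ∫ x in (0:ℝ)..c, min 1 (-Real.log (1 - x))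
        = (1 - c) * Real.log (1 - c) + c := by
      rw [intervalIntegral.integral_congr heq1, hardness_antider c hc0 hc1]
    -- piece 2: on (c, 1-β], min = 1 a.e.
    have hne : ∀ᵐ x : ℝ, x ≠ (1:ℝ) := by
      rw [MeasureTheory.ae_iff]
      simpa using measure_singleton (1:ℝ)
    have hae : ∀ᵐ x : ℝ, x ∈ Set.uIoc c (1 - β) →
        min 1 (-Real.log (1 - x)) = 1 := by
      filter_upwards [hne] with x hx hxI
      rw [Set.uIoc_of_le hcle] at hxI
      have hxlt1 : x < 1 := lt_of_le_of_ne (by linarith [hxI.2]) hx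
      have hx1 : (0:ℝ) < 1 - x := by linarith
      have hlt : 1 - x < 1 / Real.exp 1 := by
        have := hxI.1; simp only [hcdef] at this; linarith
      have : Real.log (1 - x) < Real.log (1 / Real.exp 1) :=
        Real.log_lt_log hx1 hlt
      rw [hlog_inv] at this
      rw [min_eq_left (by linarith)]
    have hI2 : ∫ x in c..(1 - β), min 1 (-Real.log (1 - x)) = (1 - β) - c := by
      rw [intervalIntegral.integral_congr_ae hae]
      simp
    -- integrability of each piece
    have hint1 : IntervalIntegrable (fun x => min 1 (-Real.log (1 - x))) volume 0 c := by
      have hcont : ContinuousOn (fun x => -Real.log (1 - x)) (Set.uIcc 0 c) := by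
        rw [Set.uIcc_of_le hc0]
        apply ContinuousOn.neg
        apply ContinuousOn.log (by fun_prop)
        intro x hx
        have : (0:ℝ) < 1 - x := by linarith [hx.2]
        exact ne_of_gt this
      have := hcont.intervalIntegrable (μ := volume)
      rw [intervalIntegrable_iff] at this ⊢
      exact this.congr ((ae_restrict_iff' measurableSet_uIoc).2
        (Filter.Eventually.of_forall fun x hx =>
          (heq1 (Set.uIoc_subset_uIcc hx)).symm))
    have hint2 : IntervalIntegrable (fun x => min 1 (-Real.log (1 - x))) volume c (1 - β) := by
      have hone : IntervalIntegrable (fun _ : ℝ => (1:ℝ)) volume c (1 - β) :=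
        intervalIntegrable_const
      rw [intervalIntegrable_iff] at hone ⊢
      exact hone.congr ((ae_restrict_iff' measurableSet_uIoc).2
        (by filter_upwards [hae] with x hx hxI; exact (hx hxI).symm))
    rw [← intervalIntegral.integral_add_adjacent_intervals hint1 hint2, hI1, hI2]
    have hlogc : Real.log (1 - c) = -1 := by
      simp only [hcdef]
      rw [show (1:ℝ) - (1 - 1 / Real.exp 1) = 1 / Real.exp 1 by ring, hlog_inv]
    rw [hlogc]
    simp only [hcdef]
    ring
  · rw [if_neg hc]
    push_neg at hc
    have hβpos : 0 < β := lt_trans hinv hc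
    have ht0 : 0 ≤ 1 - β := by linarith
    have ht1 : 1 - β < 1 := by linarith
    have heq : Set.EqOn (fun x => min 1 (-Real.log (1 - x)))
        (fun x => -Real.log (1 - x)) (Set.uIcc 0 (1 - β)) := by
      intro x hx
      rw [Set.uIcc_of_le ht0] at hx
      have hx1 : 1 / Real.exp 1 < 1 - x := by linarith [hx.2]
      have : Real.log (1 / Real.exp 1) < Real.log (1 - x) :=
        Real.log_lt_log hinv hx1
      rw [hlog_inv] at this
      simp only
      rw [min_eq_right (by linarith)]
    rw [intervalIntegral.integral_congr heq, hardness_antider _ ht0 ht1]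
    have : (1:ℝ) - (1 - β) = β := by ring
    rw [this]
    ring
end

section
/- For every β ∈ [0,1], (1 - 1/e)·𝟙[β ≤ 1/e] + (1 + β·log β)·𝟙[β > 1/e] ≤ β + (1 - β)·(1 - 1/e), with strict inequality for β ∈ (0,1). Here 1 + β·log β is interpreted via the convention 0·log 0 = 0. -/
/-!
The right-hand side equals `1 - (1 - β) / e`. Below `1/e` it exceeds `G β = 1 - 1/e`
by `β / e`. Above `1/e`, `log β ≤ β - 1` gives `β log β ≤ β (β - 1) ≤ (β - 1) / e`, the last step
because `β - 1 ≤ 0` and `β > 1/e`; it is strict for `β < 1`.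
-/

/-- The tight asymptotic competitive ratio as a function of the EFET β
(with the convention `0 * log 0 = 0`, which holds since `Real.log 0 = 0`). -/
noncomputable def G (β : ℝ) : ℝ :=
  if β ≤ 1 / Real.exp 1 then 1 - 1 / Real.exp 1 else 1 + β * Real.log β

open Real

lemma linear_bound_eq (β : ℝ) :
    β + (1 - β) * (1 - 1 / exp 1) = 1 - (1 - β) / exp 1 := by
  ring

lemma mul_log_le_mul_sub_one {x : ℝ} (hx : 0 ≤ x) : x * log x ≤ x * (x - 1) := by
  rcases hx.eq_or_lt with rfl | hx
  · simp
  · exact mul_le_mul_of_nonneg_left (log_le_sub_one_of_pos hx) hx.le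

lemma G_le_one_sub_div_exp {β : ℝ} (h0 : 0 ≤ β) (h1 : β ≤ 1) :
    G β ≤ 1 - (1 - β) / exp 1 := by
  unfold G
  split_ifs with hβ
  · gcongr
    linarith
  · calc 1 + β * log β ≤ 1 + β * (β - 1) := by linarith [mul_log_le_mul_sub_one h0]
      _ ≤ 1 + 1 / exp 1 * (β - 1) := by
        linarith [mul_le_mul_of_nonpos_right (not_le.1 hβ).le (sub_nonpos.2 h1)]
      _ = 1 - (1 - β) / exp 1 := by ring

lemma G_lt_one_sub_div_exp {β : ℝ} (h0 : 0 < β) (h1 : β < 1) :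
    G β < 1 - (1 - β) / exp 1 := by
  unfold G
  split_ifs with hβ
  · gcongr
    linarith
  · calc 1 + β * log β ≤ 1 + β * (β - 1) := by linarith [mul_log_le_mul_sub_one h0.le]
      _ < 1 + 1 / exp 1 * (β - 1) := by
        linarith [mul_lt_mul_of_neg_right (not_le.1 hβ) (sub_neg.2 h1)]
      _ = 1 - (1 - β) / exp 1 := by ring

theorem G_le_linear_bound (β : ℝ) (hβ : β ∈ Set.Icc (0:ℝ) 1) :
    G β ≤ β + (1 - β) * (1 - 1 / Real.exp 1) ∧
    (β ∈ Set.Ioo (0:ℝ) 1 → G β < β + (1 - β) * (1 - 1 / Real.exp 1)) := by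
  rw [linear_bound_eq]
  exact ⟨G_le_one_sub_div_exp hβ.1 hβ.2, fun h => G_lt_one_sub_div_exp h.1 h.2⟩
end

section
/- Let ψ(x) = 1 - exp(x - 1), and fix c > 0 and y_e, y_i, a_e, m ≥ 0 with y_e + y_i ≤ c, m + y_e ≤ c. Then y_e + y_i·ψ(m/(c - y_e)) + c·(1 - ψ(m/c) - 1/e) ≥ (1 - 1/e)·(y_e + y_i). -/
noncomputable def psi (x : ℝ) : ℝ := 1 - Real.exp (x - 1)

theorem ranking_case_i_bound (c ye yi ae m : ℝ) (hc : 0 < c)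
    (hye : 0 ≤ ye) (hyi : 0 ≤ yi) (hae : 0 ≤ ae) (hm : 0 ≤ m)
    (hyec : ye + yi ≤ c) (hmye : m + ye ≤ c) :
    ye + yi * psi (m / (c - ye)) + c * (1 - psi (m / c) - 1 / Real.exp 1)
      ≥ (1 - 1 / Real.exp 1) * (ye + yi) := by
  have hA : (0:ℝ) < Real.exp (-1) := Real.exp_pos _
  have hinv : 1 / Real.exp 1 = Real.exp (-1) := by
    rw [Real.exp_neg]; ring
  rcases lt_or_ge ye c with hlt | hge
  · have hd : 0 < c - ye := by linarith
    set t : ℝ := m * ye / (c * (c - ye)) with ht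
    set E : ℝ := Real.exp (m / (c - ye) - 1) with hE
    set F : ℝ := Real.exp (m / c - 1) with hF
    have hEpos : 0 < E := Real.exp_pos _
    have hsplit : m / c - 1 = (m / (c - ye) - 1) + (-t) := by
      rw [ht]; field_simp; ring
    have hFE : F = E * Real.exp (-t) := by
      rw [hF, hsplit, Real.exp_add, hE]
    have hexp : 1 - t ≤ Real.exp (-t) := by
      have := Real.add_one_le_exp (-t); linarith
    have hFge : E * (1 - t) ≤ F := by
      rw [hFE]
      exact mul_le_mul_of_nonneg_left hexp hEpos.le
    have hAE : Real.exp (-1) ≤ E := by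
      apply Real.exp_le_exp.mpr
      have : 0 ≤ m / (c - ye) := div_nonneg hm hd.le
      linarith
    have ht' : t * (c * (c - ye)) = m * ye := by
      rw [ht]; field_simp
    have hct : c * t ≤ ye := by
      have h2 : m * ye ≤ (c - ye) * ye := mul_le_mul_of_nonneg_right (by linarith) hye
      nlinarith
    have h1 : (E - Real.exp (-1)) * (c - c * t - yi) ≥ 0 := by
      apply mul_nonneg (by linarith)
      linarith
    simp only [psi, ← hE, ← hF, hinv]
    nlinarith [mul_nonneg hA.le (sub_nonneg.mpr hct)]
  · -- ye = c, hence yi = 0, m = 0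
    have hyec' : ye = c := le_antisymm (by linarith) hge
    have hyi0 : yi = 0 := by linarith
    have hm0 : m = 0 := by linarith
    subst hyec' hyi0 hm0
    simp only [psi, hinv, zero_div]
    have h0 : Real.exp (0 - 1) = Real.exp (-1) := by norm_num
    rw [h0]
    nlinarith [Real.exp_pos (-1)]
end
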